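/- Let Φ: [0,T] × ℝ^P → ℝ^P satisfy: t ↦ Φ_t(θ) is L-Lipschitz in t uniformly in θ, each Φ_q (q ∈ [0,T]) maps Lebesgue-null sets to sets whose preimage has measure bounded by a constant J times the measure of the set, and let S ⊂ ℝ^P with λ^P(N_r(S)) = O(r^k) for some k ≥ 2. Then the set A = {θ : ∃ t ∈ [0,T], Φ_t(θ) ∈ S} has Lebesgue measure zero. -/

import Mathlib

/-!
Sample the flow on the grid `t = i δ` with `δ = r / (L + 1)`, so `L δ < r`: a trajectory that meets
`S` at some time lies in the `r`-thickening of `S` at the preceding grid time. Hence `A` is covered by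
`T (L + 1) / r + 1` preimages of `N_r(S)`, each of measure at most `J C r ^ k`, and the resulting
bound `O(r ^ (k - 1))` tends to `0` with `r` because `k ≥ 2`.
-/

open MeasureTheory Filter Topology
open scoped ENNReal

section GridCover

variable {α X : Type*} [PseudoMetricSpace X]

theorem setOf_exists_mem_Icc_subset_biUnion_preimage_thickening
    {f : ℝ → α → X} {L : NNReal} {T δ r : ℝ}
    (hf : ∀ θ, LipschitzOnWith L (fun t => f t θ) (Set.Icc 0 T))
    (hδ : 0 < δ) (hLδ : L * δ < r) (S : Set X) :
    {θ | ∃ t ∈ Set.Icc 0 T, f t θ ∈ S} ⊆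
      ⋃ i ∈ Finset.range (⌊T / δ⌋₊ + 1), f (i * δ) ⁻¹' Metric.thickening r S := by
  rintro θ ⟨t, ht, htS⟩
  set i := ⌊t / δ⌋₊
  have hi_le : i * δ ≤ t := (le_div_iff₀ hδ).1 (Nat.floor_le (div_nonneg ht.1 hδ.le))
  have hi_gt : t < (i + 1) * δ := (div_lt_iff₀ hδ).1 (Nat.lt_floor_add_one _)
  have hi_mem : (i : ℝ) * δ ∈ Set.Icc 0 T := ⟨by positivity, hi_le.trans ht.2⟩
  have hi_range : i ∈ Finset.range (⌊T / δ⌋₊ + 1) :=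
    Finset.mem_range_succ_iff.2 (Nat.floor_le_floor (div_le_div_of_nonneg_right ht.2 hδ.le))
  have hdist : dist (f (i * δ) θ) (f t θ) < r :=
    calc dist (f (i * δ) θ) (f t θ) ≤ L * dist ((i : ℝ) * δ) t := (hf θ).dist_le_mul _ hi_mem _ ht
      _ ≤ L * δ := by
        gcongr
        rw [Real.dist_eq, abs_sub_comm, abs_of_nonneg (by linarith)]
        linarith
      _ < r := hLδ
  exact Set.mem_biUnion hi_range (Metric.mem_thickening_iff.2 ⟨f t θ, htS, hdist⟩)

end GridCover

section FlowMeasure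

variable {α X : Type*} [MeasurableSpace α] [PseudoMetricSpace X] [MeasurableSpace X]
  [OpensMeasurableSpace X] {μ : Measure α} {ν : Measure X} {f : ℝ → α → X} {L : NNReal} {T : ℝ}

theorem measure_setOf_exists_mem_Icc_le {c : ℝ≥0∞} {δ r : ℝ}
    (hf : ∀ θ, LipschitzOnWith L (fun t => f t θ) (Set.Icc 0 T))
    (hpre : ∀ q ∈ Set.Icc 0 T, ∀ N, MeasurableSet N → μ (f q ⁻¹' N) ≤ c * ν N)
    (hT : 0 ≤ T) (hδ : 0 < δ) (hLδ : L * δ < r) (S : Set X) :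
    μ {θ | ∃ t ∈ Set.Icc 0 T, f t θ ∈ S} ≤
      (⌊T / δ⌋₊ + 1 : ℕ) * (c * ν (Metric.thickening r S)) := by
  have hgrid : ∀ i ∈ Finset.range (⌊T / δ⌋₊ + 1), (i : ℝ) * δ ∈ Set.Icc 0 T := by
    intro i hi
    have hiT : (i : ℝ) ≤ T / δ :=
      (Nat.le_floor_iff (div_nonneg hT hδ.le)).1 (Finset.mem_range_succ_iff.1 hi)
    exact ⟨by positivity, (le_div_iff₀ hδ).1 hiT⟩
  calc μ {θ | ∃ t ∈ Set.Icc 0 T, f t θ ∈ S}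
      ≤ μ (⋃ i ∈ Finset.range (⌊T / δ⌋₊ + 1), f (i * δ) ⁻¹' Metric.thickening r S) :=
        measure_mono (setOf_exists_mem_Icc_subset_biUnion_preimage_thickening hf hδ hLδ S)
    _ ≤ ∑ i ∈ Finset.range (⌊T / δ⌋₊ + 1), μ (f (i * δ) ⁻¹' Metric.thickening r S) :=
        measure_biUnion_finset_le _ _
    _ ≤ ∑ _i ∈ Finset.range (⌊T / δ⌋₊ + 1), c * ν (Metric.thickening r S) :=
        Finset.sum_le_sum fun i hi => hpre _ (hgrid i hi) _ Metric.isOpen_thickening.measurableSet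
    _ = (⌊T / δ⌋₊ + 1 : ℕ) * (c * ν (Metric.thickening r S)) := by
        rw [Finset.sum_const, Finset.card_range, nsmul_eq_mul]

theorem measure_setOf_exists_mem_Icc_le_ofReal {J r b : ℝ}
    (hf : ∀ θ, LipschitzOnWith L (fun t => f t θ) (Set.Icc 0 T))
    (hpre : ∀ q ∈ Set.Icc 0 T, ∀ N, MeasurableSet N → μ (f q ⁻¹' N) ≤ ENNReal.ofReal J * ν N)
    (hT : 0 ≤ T) (hJ : 0 ≤ J) (hr : 0 < r) (hb : 0 ≤ b) {S : Set X}
    (hS : ν (Metric.thickening r S) ≤ ENNReal.ofReal b) :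
    μ {θ | ∃ t ∈ Set.Icc 0 T, f t θ ∈ S} ≤ ENNReal.ofReal ((T * (L + 1) / r + 1) * (J * b)) := by
  set δ := r / (L + 1)
  have hδ : 0 < δ := by positivity
  have hLδ : L * δ < r := by
    have : ((L : ℝ) + 1) * δ = r := mul_div_cancel₀ r (by positivity)
    linarith
  have hcount : (⌊T / δ⌋₊ : ℝ) + 1 ≤ T * (L + 1) / r + 1 := by
    rw [← div_div_eq_mul_div]
    exact add_le_add_left (Nat.floor_le (by positivity)) 1
  calc μ {θ | ∃ t ∈ Set.Icc 0 T, f t θ ∈ S}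
      ≤ (⌊T / δ⌋₊ + 1 : ℕ) * (ENNReal.ofReal J * ν (Metric.thickening r S)) :=
        measure_setOf_exists_mem_Icc_le hf hpre hT hδ hLδ S
    _ ≤ ENNReal.ofReal (⌊T / δ⌋₊ + 1 : ℕ) * (ENNReal.ofReal J * ENNReal.ofReal b) := by
        rw [ENNReal.ofReal_natCast]
        gcongr
    _ ≤ ENNReal.ofReal ((T * (L + 1) / r + 1) * (J * b)) := by
        rw [← ENNReal.ofReal_mul hJ, ← ENNReal.ofReal_mul (by positivity)]
        gcongr
        exact_mod_cast hcount

end FlowMeasure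

theorem flow_avoids_high_codimension_set_general
    {P k : ℕ} (hk : 2 ≤ k) {T : ℝ} (hT : 0 < T)
    (Φ : ℝ → EuclideanSpace ℝ (Fin P) → EuclideanSpace ℝ (Fin P))
    (L : NNReal)
    (hLip : ∀ θ : EuclideanSpace ℝ (Fin P),
      LipschitzOnWith L (fun t => Φ t θ) (Set.Icc 0 T))
    (J : ℝ) (hJ : 0 < J)
    (hpre : ∀ q ∈ Set.Icc (0:ℝ) T, ∀ N : Set (EuclideanSpace ℝ (Fin P)),
      MeasurableSet N → volume (Φ q ⁻¹' N) ≤ ENNReal.ofReal J * volume N)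
    (S : Set (EuclideanSpace ℝ (Fin P)))
    (C : ℝ) (hC : 0 < C) (r₀ : ℝ) (hr₀ : 0 < r₀)
    (hS : ∀ r ∈ Set.Ioo (0:ℝ) r₀,
      volume (Metric.thickening r S) ≤ ENNReal.ofReal (C * r ^ k)) :
    volume {θ : EuclideanSpace ℝ (Fin P) | ∃ t ∈ Set.Icc (0:ℝ) T, Φ t θ ∈ S} = 0 := by
  obtain ⟨m, rfl⟩ := Nat.exists_eq_add_of_le' hk
  set g : ℝ → ℝ := fun r => J * C * (T * (L + 1) * r ^ (m + 1) + r ^ (m + 2))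
  have hg : Tendsto (fun r => ENNReal.ofReal (g r)) (𝓝[>] 0) (𝓝 0) := by
    have hg_cont : Continuous g := by fun_prop
    simpa [g] using (ENNReal.tendsto_ofReal (hg_cont.tendsto 0)).mono_left nhdsWithin_le_nhds
  have hbound : ∀ r ∈ Set.Ioo 0 r₀,
      volume {θ | ∃ t ∈ Set.Icc 0 T, Φ t θ ∈ S} ≤ ENNReal.ofReal (g r) := by
    intro r hr
    have hr0 : r ≠ 0 := hr.1.ne'
    convert measure_setOf_exists_mem_Icc_le_ofReal hLip hpre hT.le hJ.le hr.1
      (mul_nonneg hC.le (pow_nonneg hr.1.le _)) (hS r hr) using 2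
    simp only [g]
    field_simp
    ring
  exact le_zero_iff.1 (ge_of_tendsto hg (eventually_of_mem (Ioo_mem_nhdsGT hr₀) hbound))

theorem flow_avoids_high_codimension_set
    {P k : ℕ} (hk : 2 ≤ k) {T : ℝ} (hT : 0 < T)
    (Φ : ℝ → EuclideanSpace ℝ (Fin P) → EuclideanSpace ℝ (Fin P))
    (L : NNReal) (hL : 0 < L)
    (hLip : ∀ θ : EuclideanSpace ℝ (Fin P),
      LipschitzOnWith L (fun t => Φ t θ) (Set.Icc 0 T))
    (J : ℝ) (hJ : 0 < J)
    (hpre : ∀ q ∈ Set.Icc (0:ℝ) T, ∀ N : Set (EuclideanSpace ℝ (Fin P)),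
      MeasurableSet N → volume (Φ q ⁻¹' N) ≤ ENNReal.ofReal J * volume N)
    (S : Set (EuclideanSpace ℝ (Fin P)))
    (C : ℝ) (hC : 0 < C) (r₀ : ℝ) (hr₀ : 0 < r₀)
    (hS : ∀ r ∈ Set.Ioo (0:ℝ) r₀,
      volume (Metric.thickening r S) ≤ ENNReal.ofReal (C * r ^ k)) :
    volume {θ : EuclideanSpace ℝ (Fin P) | ∃ t ∈ Set.Icc (0:ℝ) T, Φ t θ ∈ S} = 0 :=
  flow_avoids_high_codimension_set_general hk hT Φ L hLip J hJ hpre S C hC r₀ hr₀ hS
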